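/- Let (S,·) be a semigroup and A, B ⊆ S. If A is thick and B is syndetic, then A ∩ B is nonempty. Moreover, A ∩ B is piecewise syndetic. -/

import Mathlib

def Thick {S : Type*} [Semigroup S] (A : Set S) : Prop :=
  ∀ F : Finset S, ∃ x : S, ∀ f ∈ F, f * x ∈ A

def Syndetic {S : Type*} [Semigroup S] (A : Set S) : Prop :=
  ∃ F : Finset S, ∀ x : S, ∃ s ∈ F, s * x ∈ A

def PiecewiseSyndetic {S : Type*} [Semigroup S] (A : Set S) : Prop :=
  ∃ F : Finset S, Thick {x : S | ∃ s ∈ F, s * x ∈ A}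

/-!
A single `y` with `(s * g) * y ∈ A` for all `s ∈ F`, `g ∈ G` shows that `⋂ s ∈ F, s⁻¹A` is thick
whenever `A` is. If `B` is syndetic with witness `F`, then every point `x` of this set has some
`s ∈ F` with `s * x ∈ B`, and also `s * x ∈ A`; so `⋃ s ∈ F, s⁻¹(A ∩ B)` contains a thick set.
A piecewise syndetic set is nonempty because thick sets are.
-/

open scoped Pointwise

section

variable {S : Type*} [Semigroup S] {A : Set S}

theorem Thick.mono {A' : Set S} (hA : Thick A) (h : A ⊆ A') : Thick A' := fun F =>
  let ⟨x, hx⟩ := hA F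
  ⟨x, fun f hf => h (hx f hf)⟩

theorem Thick.nonempty [Nonempty S] (hA : Thick A) : A.Nonempty :=
  let ⟨x, hx⟩ := hA {Classical.arbitrary S}
  ⟨Classical.arbitrary S * x, hx _ (Finset.mem_singleton_self _)⟩

theorem Thick.biInter_preimage_mul_left (hA : Thick A) (F : Finset S) :
    Thick (⋂ s ∈ F, (s * ·) ⁻¹' A) := by
  classical
  intro G
  obtain ⟨y, hy⟩ := hA (F * G)
  refine ⟨y, fun g hg => Set.mem_iInter₂.2 fun s hs => ?_⟩
  simpa only [Set.mem_preimage, mul_assoc] using hy _ (Finset.mul_mem_mul hs hg)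

theorem PiecewiseSyndetic.nonempty (hA : PiecewiseSyndetic A) : A.Nonempty := by
  obtain ⟨F, hF⟩ := hA
  obtain ⟨x, -⟩ := hF ∅
  have : Nonempty S := ⟨x⟩
  obtain ⟨y, s, -, hsy⟩ := hF.nonempty
  exact ⟨s * y, hsy⟩

end

theorem thick_inter_syndetic {S : Type*} [Semigroup S] (A B : Set S)
    (hA : Thick A) (hB : Syndetic B) :
    (A ∩ B).Nonempty ∧ PiecewiseSyndetic (A ∩ B) := by
  obtain ⟨F, hF⟩ := hB
  have hAB : PiecewiseSyndetic (A ∩ B) := by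
    refine ⟨F, (hA.biInter_preimage_mul_left F).mono fun x hx => ?_⟩
    obtain ⟨s, hs, hsB⟩ := hF x
    exact ⟨s, hs, Set.mem_iInter₂.1 hx s hs, hsB⟩
  exact ⟨hAB.nonempty, hAB⟩
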